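/- Let K := L²(ℝ³, ℂ). Let (ε_i)_{i≥1} be a strictly decreasing sequence of positive reals with ε_i → 0, and for i ≥ 1 let S_i := { k ∈ ℝ³ : ε_{i+1} ≤ |k| < ε_i } be the corresponding spherical shell. Let (Q_i)_{i≥1} be orthogonal projections on K of finite rank r_i whose ranges consist of functions vanishing almost everywhere outside S_i, and let (b_i)_{i≥1} be reals in (0,1) such that C := Σ_{i≥1} (1/b_i − 1)² r_i ε_i < ∞. Define m(k) := min(|k|, ε₁). Then for every v ∈ K vanishing almost everywhere on some ball around the origin, only finitely many of the vectors Q_i(m^{1/2} v) are nonzero and ‖Σ_{i≥1} (1/b_i − 1) Q_i(m^{1/2} v)‖² ≤ C ‖v‖²; consequently there is a bounded linear operator B on K with ‖B‖ ≤ ε₁^{1/2} + C^{1/2} such that B v = m^{1/2} v + Σ_{i≥1} (1/b_i − 1) Q_i(m^{1/2} v) for all such v. -/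

import Mathlib

open MeasureTheory Complex

noncomputable abbrev E3 : Type := EuclideanSpace ℝ (Fin 3)

/-- `K = L²(ℝ³, ℂ)`. -/
noncomputable abbrev KL2 : Type := Lp ℂ 2 (volume : Measure E3)

lemma inner_zero_of_disjoint_support (f g : KL2) (A B : Set E3) (hAB : Disjoint A B)
    (hf : ∀ᵐ k : E3 ∂(volume : Measure E3), k ∉ A → (f : E3 → ℂ) k = 0)
    (hg : ∀ᵐ k : E3 ∂(volume : Measure E3), k ∉ B → (g : E3 → ℂ) k = 0) :
    (inner ℂ f g : ℂ) = 0 := by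
  rw [MeasureTheory.L2.inner_def]
  refine integral_eq_zero_of_ae ?_
  filter_upwards [hf, hg] with k hfk hgk
  by_cases hkA : k ∈ A
  · simp [hgk (Set.disjoint_left.mp hAB hkA)]
  · simp [hfk hkA]

lemma norm_sq_sum_of_orth (f : ℕ → KL2) (s : Finset ℕ)
    (h : ∀ i ∈ s, ∀ j ∈ s, i ≠ j → (inner ℂ (f i) (f j) : ℂ) = 0) :
    ‖∑ i ∈ s, f i‖ ^ 2 = ∑ i ∈ s, ‖f i‖ ^ 2 := by
  have h1 : (inner ℂ (∑ i ∈ s, f i) (∑ i ∈ s, f i) : ℂ) = ∑ i ∈ s, inner ℂ (f i) (f i) := by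
    rw [sum_inner]
    refine Finset.sum_congr rfl fun i hi => ?_
    rw [inner_sum, Finset.sum_eq_single_of_mem i hi]
    exact fun j hj hji => h i hi j hj (Ne.symm hji)
  calc ‖∑ i ∈ s, f i‖ ^ 2
      = RCLike.re (inner ℂ (∑ i ∈ s, f i) (∑ i ∈ s, f i) : ℂ) := (inner_self_eq_norm_sq _).symm
    _ = ∑ i ∈ s, RCLike.re (inner ℂ (f i) (f i) : ℂ) := by rw [h1, map_sum]
    _ = ∑ i ∈ s, ‖f i‖ ^ 2 := Finset.sum_congr rfl fun i _ => inner_self_eq_norm_sq _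

lemma memℒp_sqrtmin_mul (e : ℝ) (v : KL2) :
    MemLp (fun k : E3 => ((Real.sqrt (min ‖k‖ e) : ℝ) : ℂ) * (v : E3 → ℂ) k) 2
      (volume : Measure E3) := by
  have hc : Continuous fun k : E3 => ((Real.sqrt (min ‖k‖ e) : ℝ) : ℂ) :=
    Complex.continuous_ofReal.comp ((continuous_norm.min continuous_const).sqrt)
  refine MemLp.of_le ((Lp.memLp v).const_smul ((Real.sqrt e : ℝ) : ℂ))
    (hc.aestronglyMeasurable.mul (Lp.aestronglyMeasurable v)) ?_
  refine Filter.Eventually.of_forall fun k => ?_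
  rw [Pi.smul_apply, norm_smul, norm_mul]
  gcongr
  rw [Complex.norm_real, Complex.norm_real, Real.norm_eq_abs, Real.norm_eq_abs, _root_.abs_of_nonneg (Real.sqrt_nonneg _),
    _root_.abs_of_nonneg (Real.sqrt_nonneg _)]
  exact Real.sqrt_le_sqrt (min_le_right _ _)

noncomputable def Mop (e : ℝ) (v : KL2) : KL2 := (memℒp_sqrtmin_mul e v).toLp _

lemma Mop_coe (e : ℝ) (v : KL2) :
    (Mop e v : E3 → ℂ) =ᵐ[(volume : Measure E3)]
      fun k => ((Real.sqrt (min ‖k‖ e) : ℝ) : ℂ) * (v : E3 → ℂ) k :=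
  MemLp.coeFn_toLp _

lemma memℒp_ind (A : Set E3) (hA : MeasurableSet A) (v : KL2) :
    MemLp (A.indicator (v : E3 → ℂ)) 2 (volume : Measure E3) :=
  MemLp.of_le (Lp.memLp v) ((Lp.aestronglyMeasurable v).indicator hA)
    (Filter.Eventually.of_forall fun _ => norm_indicator_le_norm_self _ _)

noncomputable def Pop (A : Set E3) (hA : MeasurableSet A) (v : KL2) : KL2 :=
  (memℒp_ind A hA v).toLp _

lemma Pop_coe (A : Set E3) (hA : MeasurableSet A) (v : KL2) :
    (Pop A hA v : E3 → ℂ) =ᵐ[(volume : Measure E3)] A.indicator (v : E3 → ℂ) :=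
  MemLp.coeFn_toLp _

lemma Lp_coeFn_finsetSum (s : Finset ℕ) (f : ℕ → KL2) :
    ((∑ i ∈ s, f i : KL2) : E3 → ℂ) =ᵐ[(volume : Measure E3)]
      fun k => ∑ i ∈ s, (f i : E3 → ℂ) k := by
  classical
  induction s using Finset.induction_on with
  | empty => simp only [Finset.sum_empty]; exact Lp.coeFn_zero ℂ 2 (volume : Measure E3)
  | insert a s hnot ih =>
    rw [Finset.sum_insert hnot]
    refine (Lp.coeFn_add _ _).trans ?_
    filter_upwards [ih] with k hk
    rw [Pi.add_apply, hk]
    show _ = ∑ i ∈ insert a s, (f i : E3 → ℂ) k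
    rw [Finset.sum_insert hnot]



set_option maxHeartbeats 1000000 in
/-- Lemma 3.2: with shells `S_i`, finite-rank orthogonal projections `Q_i`
supported in `S_i`, and weights `b_i ∈ (0,1)` with
`C = Σ (1/b_i − 1)² rk(Q_i) ε_i < ∞`, the operator
`v ↦ m^{1/2} v + Σ_i (1/b_i − 1) Q_i (m^{1/2} v)` (with `m(k) = min(|k|, ε₁)`)
is well defined on vectors vanishing near `k = 0` and extends to a bounded
operator `B` with `‖B‖ ≤ ε₁^{1/2} + C^{1/2}`. -/
theorem stmt8
    (ε : ℕ → ℝ) (hεpos : ∀ i, 0 < ε i) (hεanti : StrictAnti ε)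
    (hεlim : Filter.Tendsto ε Filter.atTop (nhds 0))
    (S : ℕ → Set E3) (hS : ∀ i, S i = {k : E3 | ε (i + 1) ≤ ‖k‖ ∧ ‖k‖ < ε i})
    (Q : ℕ → (KL2 →L[ℂ] KL2))
    (hQproj : ∀ i, ∀ f : KL2, Q i (Q i f) = Q i f)
    (hQsa : ∀ i, IsSelfAdjoint (Q i))
    (hQfin : ∀ i, FiniteDimensional ℂ (LinearMap.range ((Q i : KL2 →ₗ[ℂ] KL2))))
    (r : ℕ → ℕ)
    (hQrk : ∀ i, Module.finrank ℂ (LinearMap.range ((Q i : KL2 →ₗ[ℂ] KL2))) = r i)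
    (hQsupp : ∀ i, ∀ f : KL2, ∀ᵐ k : E3, k ∉ S i → (Q i f : E3 → ℂ) k = 0)
    (b : ℕ → ℝ) (hb : ∀ i, b i ∈ Set.Ioo (0 : ℝ) 1)
    (hsum : Summable (fun i => (1 / b i - 1) ^ 2 * (r i : ℝ) * ε i)) :
    (∀ v : KL2,
      (∃ δ > (0 : ℝ), ∀ᵐ k : E3, ‖k‖ < δ → (v : E3 → ℂ) k = 0) →
      ∀ w : KL2,
        (w : E3 → ℂ) =ᵐ[volume] (fun k => ((Real.sqrt (min ‖k‖ (ε 0)) : ℝ) : ℂ) * (v : E3 → ℂ) k) →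
        ({i : ℕ | Q i w ≠ 0}.Finite ∧
          ‖∑' i : ℕ, (((1 / b i - 1 : ℝ)) : ℂ) • Q i w‖ ^ 2
            ≤ (∑' i : ℕ, (1 / b i - 1) ^ 2 * (r i : ℝ) * ε i) * ‖v‖ ^ 2)) ∧
    ∃ B : KL2 →L[ℂ] KL2,
      ‖B‖ ≤ Real.sqrt (ε 0) + Real.sqrt (∑' i : ℕ, (1 / b i - 1) ^ 2 * (r i : ℝ) * ε i) ∧
      ∀ v : KL2,
        (∃ δ > (0 : ℝ), ∀ᵐ k : E3, ‖k‖ < δ → (v : E3 → ℂ) k = 0) →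
        ∀ w : KL2,
          (w : E3 → ℂ) =ᵐ[volume]
            (fun k => ((Real.sqrt (min ‖k‖ (ε 0)) : ℝ) : ℂ) * (v : E3 → ℂ) k) →
          B v = w + ∑' i : ℕ, (((1 / b i - 1 : ℝ)) : ℂ) • Q i w := by
  classical
  set C : ℝ := ∑' i : ℕ, (1 / b i - 1) ^ 2 * (r i : ℝ) * ε i with hCdef
  have hterm_nonneg : ∀ j : ℕ, 0 ≤ (1 / b j - 1) ^ 2 * (r j : ℝ) * ε j := fun j =>
    mul_nonneg (mul_nonneg (sq_nonneg _) (Nat.cast_nonneg _)) (hεpos j).le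
  have hC0 : 0 ≤ C := tsum_nonneg hterm_nonneg
  -- measurability and disjointness of the shells
  have hSmeas : ∀ i, MeasurableSet (S i) := by
    intro i
    have : S i = (fun k : E3 => ‖k‖) ⁻¹' Set.Ico (ε (i + 1)) (ε i) := by
      rw [hS i]; rfl
    rw [this]
    exact measurable_norm measurableSet_Ico
  have hSdisj : ∀ {i j : ℕ}, i ≠ j → Disjoint (S i) (S j) := by
    have haux : ∀ i j : ℕ, i < j → Disjoint (S i) (S j) := by
      intro i j hij
      rw [Set.disjoint_left]
      intro x hxi hxj
      rw [hS i] at hxi; rw [hS j] at hxj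
      have h1 : ε j ≤ ε (i + 1) := hεanti.antitone hij
      exact absurd (hxj.2.trans_le (h1.trans hxi.1)) (lt_irrefl _)
    intro i j hij
    rcases lt_or_gt_of_ne hij with h | h
    · exact haux i j h
    · exact (haux j i h).symm
  -- notation
  set M : KL2 → KL2 := fun v => Mop (ε 0) v with hMdef
  set P : ℕ → KL2 → KL2 := fun i v => Pop (S i) (hSmeas i) v with hPdef
  -- support of P and Q elements
  have hPsupp : ∀ i (u : KL2), ∀ᵐ k : E3, k ∉ S i → (P i u : E3 → ℂ) k = 0 := by
    intro i u
    filter_upwards [Pop_coe (S i) (hSmeas i) u] with k hk hkn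
    rw [hk, Set.indicator_of_notMem hkn]
  -- the key inner-product identity
  have key_inner : ∀ i (u : KL2),
      (inner ℂ (Q i u) (Q i u) : ℂ) = inner ℂ (P i u) (Q i u) := by
    intro i u
    have hsym := (hQsa i).isSymmetric u (Q i u)
    simp only [ContinuousLinearMap.coe_coe] at hsym
    rw [hQproj i u] at hsym
    have hsub : ∀ᵐ k : E3, k ∉ (S i)ᶜ → ((u - P i u : KL2) : E3 → ℂ) k = 0 := by
      filter_upwards [Lp.coeFn_sub u (P i u), Pop_coe (S i) (hSmeas i) u] with k h1 h2 hk
      have hkS : k ∈ S i := Set.not_notMem.mp hk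
      rw [h1, Pi.sub_apply, h2, Set.indicator_of_mem hkS, sub_self]
    have h2 : (inner ℂ (u - P i u) (Q i u) : ℂ) = 0 :=
      inner_zero_of_disjoint_support _ _ ((S i)ᶜ) (S i) disjoint_compl_left hsub (hQsupp i u)
    rw [inner_sub_left, sub_eq_zero] at h2
    exact hsym.trans h2
  have key1 : ∀ i (u : KL2), ‖Q i u‖ ≤ ‖P i u‖ := by
    intro i u
    have hsq : ‖Q i u‖ ^ 2 ≤ ‖P i u‖ * ‖Q i u‖ := by
      calc ‖Q i u‖ ^ 2 = RCLike.re (inner ℂ (Q i u) (Q i u) : ℂ) := (inner_self_eq_norm_sq _).symm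
        _ = RCLike.re (inner ℂ (P i u) (Q i u) : ℂ) := by rw [key_inner i u]
        _ ≤ ‖(inner ℂ (P i u) (Q i u) : ℂ)‖ :=
            (le_abs_self _).trans (RCLike.abs_re_le_norm _)
        _ ≤ ‖P i u‖ * ‖Q i u‖ := norm_inner_le_norm _ _
    rcases eq_or_lt_of_le (norm_nonneg (Q i u)) with h | h
    · rw [← h]; exact norm_nonneg _
    · rw [sq] at hsq; exact le_of_mul_le_mul_right hsq h
  -- ‖P i (M v)‖ ≤ √(ε i) ‖P i v‖
  have hPM : ∀ i (v : KL2), ‖P i (M v)‖ ≤ Real.sqrt (ε i) * ‖P i v‖ := by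
    intro i v
    apply Lp.norm_le_mul_norm_of_ae_le_mul
    filter_upwards [Pop_coe (S i) (hSmeas i) (M v), Pop_coe (S i) (hSmeas i) v,
      (Mop_coe (ε 0) v)] with k h1 h2 h3
    rw [h1, h2]
    by_cases hkS : k ∈ S i
    · rw [Set.indicator_of_mem hkS, Set.indicator_of_mem hkS, h3, norm_mul]
      have hknorm : ‖k‖ < ε i := by
        rw [hS i] at hkS; exact hkS.2
      have hφ : ‖((Real.sqrt (min ‖k‖ (ε 0)) : ℝ) : ℂ)‖ ≤ Real.sqrt (ε i) := by
        rw [Complex.norm_real, Real.norm_eq_abs, _root_.abs_of_nonneg (Real.sqrt_nonneg _)]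
        exact Real.sqrt_le_sqrt ((min_le_left _ _).trans hknorm.le)
      exact mul_le_mul_of_nonneg_right hφ (norm_nonneg _)
    · rw [Set.indicator_of_notMem hkS, Set.indicator_of_notMem hkS]
      simp [Real.sqrt_nonneg]
  -- P i v are pairwise orthogonal with total mass ≤ ‖v‖²
  have hPsum : ∀ (v : KL2) (s : Finset ℕ), (∑ i ∈ s, ‖P i v‖ ^ 2) ≤ ‖v‖ ^ 2 := by
    intro v s
    have horth : ∀ i ∈ s, ∀ j ∈ s, i ≠ j → (inner ℂ (P i v) (P j v) : ℂ) = 0 := by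
      intro i _ j _ hij
      exact inner_zero_of_disjoint_support _ _ (S i) (S j) (hSdisj hij)
        (hPsupp i v) (hPsupp j v)
    rw [← norm_sq_sum_of_orth _ _ horth]
    have hble : ‖∑ i ∈ s, P i v‖ ≤ ‖v‖ := by
      apply Lp.norm_le_norm_of_ae_le
      filter_upwards [Lp_coeFn_finsetSum s (fun i => P i v),
        (Filter.eventually_all_finset s).mpr (fun i _ => Pop_coe (S i) (hSmeas i) v)]
        with k hk hins
      rw [hk]
      by_cases hex : ∃ j ∈ s, k ∈ S j
      · obtain ⟨j, hjs, hkj⟩ := hex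
        rw [Finset.sum_eq_single_of_mem j hjs (fun i his hij => by
          rw [hins i his, Set.indicator_of_notMem
            (fun hki => Set.disjoint_left.mp (hSdisj hij) hki hkj)])]
        rw [hins j hjs, Set.indicator_of_mem hkj]
      · push_neg at hex
        rw [Finset.sum_eq_zero (fun i his => by
          rw [hins i his, Set.indicator_of_notMem (hex i his)])]
        simp
    exact pow_le_pow_left₀ (norm_nonneg _) hble 2
  have hPle : ∀ i (v : KL2), ‖P i v‖ ≤ ‖v‖ := by
    intro i v
    have := hPsum v {i}
    rw [Finset.sum_singleton] at this
    have h1 := Real.sqrt_le_sqrt this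
    rwa [Real.sqrt_sq (norm_nonneg _), Real.sqrt_sq (norm_nonneg _)] at h1
  -- weight bound for nonvanishing projections
  have hCub : ∀ i (u : KL2), Q i u ≠ 0 → (1 / b i - 1) ^ 2 * ε i ≤ C := by
    intro i u h0
    have hr : (1 : ℝ) ≤ r i := by
      haveI := hQfin i
      have hnt : Nontrivial (LinearMap.range ((Q i : KL2 →ₗ[ℂ] KL2))) := by
        refine nontrivial_of_ne ⟨Q i u, ⟨u, by simp⟩⟩ 0 fun hEq => ?_
        exact h0 (by simpa using congrArg Subtype.val hEq)
      have := Module.finrank_pos_iff (R := ℂ) |>.mpr hnt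
      rw [hQrk i] at this
      exact_mod_cast this
    have h1 : (1 / b i - 1) ^ 2 * (r i : ℝ) * ε i ≤ C :=
      Summable.le_tsum hsum i (fun j _ => hterm_nonneg j)
    nlinarith [sq_nonneg (1 / b i - 1), (hεpos i).le]
  -- expansion of finite orthogonal sums
  have hfin_eq : ∀ (u : KL2) (s : Finset ℕ),
      ‖∑ i ∈ s, (((1 / b i - 1 : ℝ)) : ℂ) • Q i u‖ ^ 2
        = ∑ i ∈ s, (1 / b i - 1) ^ 2 * ‖Q i u‖ ^ 2 := by
    intro u s
    have horth : ∀ i ∈ s, ∀ j ∈ s, i ≠ j →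
        (inner ℂ ((((1 / b i - 1 : ℝ)) : ℂ) • Q i u) ((((1 / b j - 1 : ℝ)) : ℂ) • Q j u) : ℂ) = 0 := by
      intro i _ j _ hij
      rw [inner_smul_left, inner_smul_right,
        inner_zero_of_disjoint_support _ _ (S i) (S j) (hSdisj hij) (hQsupp i u) (hQsupp j u)]
      simp
    rw [norm_sq_sum_of_orth _ _ horth]
    refine Finset.sum_congr rfl fun i _ => ?_
    rw [norm_smul, Complex.norm_real, Real.norm_eq_abs, mul_pow, _root_.sq_abs]
  -- pointwise bound for the summands at M v
  have hQM_sq : ∀ (v : KL2) i, ‖Q i (M v)‖ ^ 2 ≤ ε i * ‖P i v‖ ^ 2 := by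
    intro v i
    have hq := (key1 i (M v)).trans (hPM i v)
    have h2 := pow_le_pow_left₀ (norm_nonneg _) hq 2
    rwa [mul_pow, Real.sq_sqrt (hεpos i).le] at h2
  have hdom : ∀ (v : KL2) i,
      (1 / b i - 1) ^ 2 * ‖Q i (M v)‖ ^ 2
        ≤ ((1 / b i - 1) ^ 2 * (r i : ℝ) * ε i) * ‖v‖ ^ 2 := by
    intro v i
    by_cases h0 : Q i (M v) = 0
    · rw [h0]
      simp only [norm_zero, ne_eq, OfNat.ofNat_ne_zero, not_false_eq_true, zero_pow, mul_zero]
      exact mul_nonneg (hterm_nonneg i) (sq_nonneg _)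
    · have hr : (1 : ℝ) ≤ r i := by
        haveI := hQfin i
        have hnt : Nontrivial (LinearMap.range ((Q i : KL2 →ₗ[ℂ] KL2))) := by
          refine nontrivial_of_ne ⟨Q i (M v), ⟨M v, by simp⟩⟩ 0 fun hEq => ?_
          exact h0 (by simpa using congrArg Subtype.val hEq)
        have := Module.finrank_pos_iff (R := ℂ) |>.mpr hnt
        rw [hQrk i] at this
        exact_mod_cast this
      have h1 := hQM_sq v i
      have h2 : ‖P i v‖ ^ 2 ≤ ‖v‖ ^ 2 := pow_le_pow_left₀ (norm_nonneg _) (hPle i v) 2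
      calc (1 / b i - 1) ^ 2 * ‖Q i (M v)‖ ^ 2
          ≤ (1 / b i - 1) ^ 2 * (ε i * ‖v‖ ^ 2) := by
            refine mul_le_mul_of_nonneg_left ?_ (sq_nonneg _)
            exact h1.trans (mul_le_mul_of_nonneg_left h2 (hεpos i).le)
        _ ≤ (1 / b i - 1) ^ 2 * ((r i : ℝ) * (ε i * ‖v‖ ^ 2)) := by
            refine mul_le_mul_of_nonneg_left ?_ (sq_nonneg _)
            exact le_mul_of_one_le_left (mul_nonneg (hεpos i).le (sq_nonneg _)) hr
        _ = ((1 / b i - 1) ^ 2 * (r i : ℝ) * ε i) * ‖v‖ ^ 2 := by ring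
  have hsumsq : ∀ v : KL2, Summable (fun i => (1 / b i - 1) ^ 2 * ‖Q i (M v)‖ ^ 2) := by
    intro v
    exact Summable.of_nonneg_of_le (fun i => mul_nonneg (sq_nonneg _) (sq_nonneg _))
      (hdom v) (hsum.mul_right (‖v‖ ^ 2))
  have hsummable : ∀ v : KL2, Summable (fun i => (((1 / b i - 1 : ℝ)) : ℂ) • Q i (M v)) := by
    intro v
    rw [summable_iff_vanishing_norm]
    intro ε' hε'
    obtain ⟨s, hs⟩ := summable_iff_vanishing_norm.mp (hsumsq v) (ε' ^ 2) (by positivity)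
    refine ⟨s, fun t ht => ?_⟩
    have h1 := hs t ht
    have hnn : (0:ℝ) ≤ ∑ i ∈ t, (1 / b i - 1) ^ 2 * ‖Q i (M v)‖ ^ 2 :=
      Finset.sum_nonneg fun i _ => mul_nonneg (sq_nonneg _) (sq_nonneg _)
    rw [Real.norm_of_nonneg hnn] at h1
    have h2 := hfin_eq (M v) t
    have h3 : ‖∑ i ∈ t, (((1 / b i - 1 : ℝ)) : ℂ) • Q i (M v)‖ ^ 2 < ε' ^ 2 := by
      rw [h2]; exact h1
    by_contra hcon
    push_neg at hcon
    exact absurd h3 (not_lt.mpr (pow_le_pow_left₀ hε'.le hcon 2))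
  -- the main quadratic estimate
  have hsum_bound : ∀ (v : KL2) (s : Finset ℕ),
      ‖∑ i ∈ s, (((1 / b i - 1 : ℝ)) : ℂ) • Q i (M v)‖ ^ 2 ≤ C * ‖v‖ ^ 2 := by
    intro v s
    rw [hfin_eq (M v) s]
    have hterm : ∀ i ∈ s, (1 / b i - 1) ^ 2 * ‖Q i (M v)‖ ^ 2 ≤ C * ‖P i v‖ ^ 2 := by
      intro i _
      by_cases h0 : Q i (M v) = 0
      · rw [h0]
        simp only [norm_zero, ne_eq, OfNat.ofNat_ne_zero, not_false_eq_true, zero_pow, mul_zero]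
        positivity
      · have h1 := hQM_sq v i
        have hCi := hCub i (M v) h0
        nlinarith [sq_nonneg (1 / b i - 1), sq_nonneg ‖P i v‖, (hεpos i).le]
    calc ∑ i ∈ s, (1 / b i - 1) ^ 2 * ‖Q i (M v)‖ ^ 2
        ≤ ∑ i ∈ s, C * ‖P i v‖ ^ 2 := Finset.sum_le_sum hterm
      _ = C * ∑ i ∈ s, ‖P i v‖ ^ 2 := (Finset.mul_sum _ _ _).symm
      _ ≤ C * ‖v‖ ^ 2 := mul_le_mul_of_nonneg_left (hPsum v s) hC0
  have htsum_le : ∀ v : KL2,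
      ‖∑' i : ℕ, (((1 / b i - 1 : ℝ)) : ℂ) • Q i (M v)‖ ^ 2 ≤ C * ‖v‖ ^ 2 := by
    intro v
    have hha : HasSum (fun i => (((1 / b i - 1 : ℝ)) : ℂ) • Q i (M v))
        (∑' i : ℕ, (((1 / b i - 1 : ℝ)) : ℂ) • Q i (M v)) := (hsummable v).hasSum
    have hcont : Continuous fun x : KL2 => ‖x‖ ^ 2 := continuous_norm.pow 2
    have htend := (hcont.tendsto _).comp hha
    exact le_of_tendsto htend (Filter.Eventually.of_forall fun s => hsum_bound v s)
  -- norm bounds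
  have hM_norm : ∀ v : KL2, ‖M v‖ ≤ Real.sqrt (ε 0) * ‖v‖ := by
    intro v
    apply Lp.norm_le_mul_norm_of_ae_le_mul
    filter_upwards [Mop_coe (ε 0) v] with k hk
    rw [hk, norm_mul, Complex.norm_real, Real.norm_eq_abs,
      _root_.abs_of_nonneg (Real.sqrt_nonneg _)]
    exact mul_le_mul_of_nonneg_right (Real.sqrt_le_sqrt (min_le_right _ _)) (norm_nonneg _)
  have hT_norm : ∀ v : KL2,
      ‖∑' i : ℕ, (((1 / b i - 1 : ℝ)) : ℂ) • Q i (M v)‖ ≤ Real.sqrt C * ‖v‖ := by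
    intro v
    have h1 := htsum_le v
    have h2 := Real.sqrt_le_sqrt h1
    rwa [Real.sqrt_sq (norm_nonneg _), Real.sqrt_mul hC0, Real.sqrt_sq (norm_nonneg _)] at h2
  -- linearity
  have hM_add : ∀ v v' : KL2, M (v + v') = M v + M v' := by
    intro v v'
    refine Lp.ext ?_
    filter_upwards [Mop_coe (ε 0) (v + v'), Mop_coe (ε 0) v, Mop_coe (ε 0) v',
      Lp.coeFn_add v v', Lp.coeFn_add (M v) (M v')] with k h1 h2 h3 h4 h5
    rw [h1, h5, Pi.add_apply, h2, h3, h4, Pi.add_apply, mul_add]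
  have hM_smul : ∀ (a : ℂ) (v : KL2), M (a • v) = a • M v := by
    intro a v
    refine Lp.ext ?_
    filter_upwards [Mop_coe (ε 0) (a • v), Mop_coe (ε 0) v,
      Lp.coeFn_smul a v, Lp.coeFn_smul a (M v)] with k h1 h2 h3 h4
    rw [h1, h4, Pi.smul_apply, h2, h3, Pi.smul_apply, smul_eq_mul, smul_eq_mul]
    ring
  have hB_add : ∀ v v' : KL2,
      (M (v + v') + ∑' i : ℕ, (((1 / b i - 1 : ℝ)) : ℂ) • Q i (M (v + v')))
        = (M v + ∑' i : ℕ, (((1 / b i - 1 : ℝ)) : ℂ) • Q i (M v))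
          + (M v' + ∑' i : ℕ, (((1 / b i - 1 : ℝ)) : ℂ) • Q i (M v')) := by
    intro v v'
    have h1 : ∀ i, (((1 / b i - 1 : ℝ)) : ℂ) • Q i (M (v + v'))
        = (((1 / b i - 1 : ℝ)) : ℂ) • Q i (M v) + (((1 / b i - 1 : ℝ)) : ℂ) • Q i (M v') := by
      intro i; rw [hM_add, map_add, smul_add]
    rw [tsum_congr h1, Summable.tsum_add (hsummable v) (hsummable v'), hM_add]
    abel
  have hB_smul : ∀ (a : ℂ) (v : KL2),
      (M (a • v) + ∑' i : ℕ, (((1 / b i - 1 : ℝ)) : ℂ) • Q i (M (a • v)))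
        = a • (M v + ∑' i : ℕ, (((1 / b i - 1 : ℝ)) : ℂ) • Q i (M v)) := by
    intro a v
    have h1 : ∀ i, (((1 / b i - 1 : ℝ)) : ℂ) • Q i (M (a • v))
        = a • ((((1 / b i - 1 : ℝ)) : ℂ) • Q i (M v)) := by
      intro i; rw [hM_smul, (Q i).map_smul, smul_comm]
    rw [tsum_congr h1, Summable.tsum_const_smul a (hsummable v), hM_smul, smul_add]
  -- the bounded operator
  let Blin : KL2 →ₗ[ℂ] KL2 :=
    { toFun := fun v => M v + ∑' i : ℕ, (((1 / b i - 1 : ℝ)) : ℂ) • Q i (M v)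
      map_add' := hB_add
      map_smul' := fun a v => hB_smul a v }
  have hBbound : ∀ v : KL2, ‖Blin v‖ ≤ (Real.sqrt (ε 0) + Real.sqrt C) * ‖v‖ := by
    intro v
    calc ‖Blin v‖ ≤ ‖M v‖ + ‖∑' i : ℕ, (((1 / b i - 1 : ℝ)) : ℂ) • Q i (M v)‖ :=
          norm_add_le _ _
      _ ≤ Real.sqrt (ε 0) * ‖v‖ + Real.sqrt C * ‖v‖ := add_le_add (hM_norm v) (hT_norm v)
      _ = (Real.sqrt (ε 0) + Real.sqrt C) * ‖v‖ := (add_mul _ _ _).symm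
  -- identification of w with M v
  have hwM : ∀ (v w : KL2),
      (w : E3 → ℂ) =ᵐ[volume]
        (fun k => ((Real.sqrt (min ‖k‖ (ε 0)) : ℝ) : ℂ) * (v : E3 → ℂ) k) → w = M v := by
    intro v w hw
    exact Lp.ext (hw.trans (Mop_coe (ε 0) v).symm)
  constructor
  · -- part 1
    intro v hv w hw
    obtain ⟨δ, hδ, hv0⟩ := hv
    have hwMv := hwM v w hw
    constructor
    · have hev : ∀ᶠ i in Filter.atTop, ε i < δ := hεlim.eventually_lt_const hδ
      obtain ⟨N, hN⟩ := Filter.eventually_atTop.mp hev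
      refine Set.Finite.subset (Set.finite_Iio N) ?_
      intro i hi
      simp only [Set.mem_setOf_eq] at hi
      by_contra hiN
      apply hi
      have hiN' : N ≤ i := not_lt.mp (by simpa [Set.mem_Iio] using hiN)
      -- P i w = 0
      have hP0 : P i w = 0 := by
        refine Lp.ext ?_
        filter_upwards [Pop_coe (S i) (hSmeas i) w, hv0, hw,
          Lp.coeFn_zero ℂ 2 (volume : Measure E3)] with k h1 h2 h3 h4
        rw [h1, h4]
        by_cases hkS : k ∈ S i
        · rw [Set.indicator_of_mem hkS, h3]
          have : ‖k‖ < δ := by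
            rw [hS i] at hkS
            exact hkS.2.trans (hN i hiN')
          rw [h2 this, mul_zero]
          rfl
        · rw [Set.indicator_of_notMem hkS]; rfl
      have h0 : (inner ℂ (Q i w) (Q i w) : ℂ) = 0 := by
        rw [key_inner i w, hP0, inner_zero_left]
      exact inner_self_eq_zero.mp h0
    · rw [hwMv]
      exact htsum_le v
  · refine ⟨LinearMap.mkContinuous Blin (Real.sqrt (ε 0) + Real.sqrt C) hBbound,
      LinearMap.mkContinuous_norm_le Blin (by positivity) hBbound, ?_⟩
    intro v hv w hw
    have hwMv := hwM v w hw
    rw [LinearMap.mkContinuous_apply]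
    show M v + ∑' i : ℕ, (((1 / b i - 1 : ℝ)) : ℂ) • Q i (M v)
      = w + ∑' i : ℕ, (((1 / b i - 1 : ℝ)) : ℂ) • Q i w
    rw [hwMv]
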